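/- Let F be a field and let x₁, x₂ be k × k matrices over F. There exists a polynomial of the form x² + a₁x + a₀ with k × k matrix coefficients a₀, a₁ whose roots include both x₁ and x₂ if and only if the rank of the matrix x₁ − x₂ equals the rank of the 2k × k matrix obtained by appending the rows of x₂² − x₁² below the rows of x₁ − x₂. -/

import Mathlib

/-!
Subtracting the two root equations eliminates `a₀`: `x₁` and `x₂` are both roots of some
`x² + a₁x + a₀` iff `a₁ (x₁ - x₂) = x₂² - x₁²` is solvable for `a₁`, i.e. iff every row of
`x₂² - x₁²` lies in the row space of `x₁ - x₂`. Since that row space is contained in the row space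
of the stacked matrix, this happens iff the two row spaces have the same dimension.
-/

open Matrix

theorem exists_monic_quadratic_roots_iff_exists_mul_sub_eq {R : Type*} [Ring R] (x₁ x₂ : R) :
    (∃ a₁ a₀ : R, x₁ ^ 2 + a₁ * x₁ + a₀ = 0 ∧ x₂ ^ 2 + a₁ * x₂ + a₀ = 0) ↔
      ∃ a₁ : R, a₁ * (x₁ - x₂) = x₂ ^ 2 - x₁ ^ 2 := by
  constructor
  · rintro ⟨a₁, a₀, h₁, h₂⟩
    have key : a₁ * (x₁ - x₂) - (x₂ ^ 2 - x₁ ^ 2) =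
        (x₁ ^ 2 + a₁ * x₁ + a₀) - (x₂ ^ 2 + a₁ * x₂ + a₀) := by noncomm_ring
    exact ⟨a₁, by rw [← sub_eq_zero, key, h₁, h₂, sub_self]⟩
  · rintro ⟨a₁, h⟩
    refine ⟨a₁, -(x₁ ^ 2 + a₁ * x₁), add_neg_cancel _, ?_⟩
    calc x₂ ^ 2 + a₁ * x₂ + -(x₁ ^ 2 + a₁ * x₁) = (x₂ ^ 2 - x₁ ^ 2) - a₁ * (x₁ - x₂) := by
          noncomm_ring
      _ = 0 := by rw [h, sub_self]

theorem Submodule.finrank_eq_finrank_sup_iff_le {K V : Type*} [DivisionRing K] [AddCommGroup V]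
    [Module K V] [FiniteDimensional K V] {U W : Submodule K V} :
    Module.finrank K U = Module.finrank K ↥(U ⊔ W) ↔ W ≤ U := by
  rw [← sup_eq_left]
  exact ⟨fun h => (eq_of_le_of_finrank_eq le_sup_left h).symm, fun h => by rw [h]⟩

namespace Matrix

variable {K m n p : Type*} [Field K] [Fintype m]

theorem exists_mul_eq_iff_forall_mem_span_row (B : Matrix m n K) (C : Matrix p n K) :
    (∃ A : Matrix p m K, A * B = C) ↔ ∀ i, C i ∈ Submodule.span K (Set.range B.row) := by
  simp_rw [Submodule.mem_span_range_iff_exists_fun]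
  constructor
  · rintro ⟨A, rfl⟩ i
    exact ⟨A i, (vecMul_eq_sum _ _).symm⟩
  · intro h
    choose A hA using h
    exact ⟨A, funext fun i => (vecMul_eq_sum _ _).trans (hA i)⟩

theorem exists_mul_eq_iff_rank_eq_rank_fromRows [Fintype n] [Finite p]
    (B : Matrix m n K) (C : Matrix p n K) :
    (∃ A : Matrix p m K, A * B = C) ↔ B.rank = (fromRows B C).rank := by
  have hrows : Set.range (fromRows B C).row = Set.range B.row ∪ Set.range C.row :=
    Set.Sum.elim_range _ _
  rw [rank_eq_finrank_span_row, rank_eq_finrank_span_row, hrows, Submodule.span_union,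
    Submodule.finrank_eq_finrank_sup_iff_le, Submodule.span_le,
    exists_mul_eq_iff_forall_mem_span_row, Set.range_subset_iff]
  rfl

end Matrix

/-- Theorem 5: for `k × k` matrices `x₁, x₂` over a field, there is a polynomial
`x² + a₁x + a₀` with both as roots iff the rank of `x₁ - x₂` equals the rank of the
`2k × k` matrix obtained by appending the rows of `x₂² - x₁²` below those of `x₁ - x₂`. -/
theorem stmt_7 {F : Type*} [Field F] (k : ℕ) (x₁ x₂ : Matrix (Fin k) (Fin k) F) :
    (∃ a₁ a₀ : Matrix (Fin k) (Fin k) F,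
        x₁ ^ 2 + a₁ * x₁ + a₀ = 0 ∧ x₂ ^ 2 + a₁ * x₂ + a₀ = 0) ↔
      (x₁ - x₂).rank = (Matrix.fromRows (x₁ - x₂) (x₂ ^ 2 - x₁ ^ 2)).rank := by
  rw [exists_monic_quadratic_roots_iff_exists_mul_sub_eq,
    exists_mul_eq_iff_rank_eq_rank_fromRows]
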